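/- Let w : ℕ × ℕ → [0,∞) be a c₀-graph and let T be its associated operator on c₀. Then for every n ≥ 1, ‖T^n‖ = sup_{v∈ℕ} Σ_{u∈ℕ} Σ_{p} w(p), where the inner sum runs over all paths p from u to v of length n. -/

import Mathlib

/-!
A bounded operator on `c₀` given by a nonnegative matrix `K` has norm equal to the supremum of
the column sums of `K`: applying it to the indicator of a finite set bounds every partial
column sum by the norm (so the columns are summable), and the reverse inequality is the
triangle inequality. Bounded column sums make the product of two such matrices absolutely
convergent, so `T ^ n` is given by the `n`-th matrix power of `w`, whose entries are the sums
of the weights of the paths of length `n`.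
-/

open Filter ZeroAtInftyContinuousMap
open scoped ZeroAtInfty

/-- The weight of a path `p = (p 0, …, p n)` in the weighted graph `(ℕ, w)`:
the product `∏_{k=1}^n w(p_{k−1}, p_k)`. -/
def pathWeight (w : ℕ × ℕ → ℝ) {n : ℕ} (p : Fin (n + 1) → ℕ) : ℝ :=
  ∏ k : Fin n, w (p k.castSucc, p k.succ)

open scoped ENNReal

namespace ZeroAtInftyContinuousMap

variable {α β : Type*} [TopologicalSpace α] [SeminormedAddCommGroup β]

theorem norm_apply_le_norm (f : C₀(α, β)) (x : α) : ‖f x‖ ≤ ‖f‖ :=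
  norm_toBCF_eq_norm (f := f) ▸ f.toBCF.norm_coe_le_norm x

theorem norm_le_of_forall_norm_apply_le {f : C₀(α, β)} {C : ℝ} (hC : 0 ≤ C)
    (h : ∀ x, ‖f x‖ ≤ C) : ‖f‖ ≤ C :=
  norm_toBCF_eq_norm (f := f) ▸ (BoundedContinuousFunction.norm_le hC).2 h

noncomputable def finsetIndicator [DiscreteTopology α] (F : Finset α) : C₀(α, ℝ) where
  toFun := (F : Set α).indicator 1
  continuous_toFun := continuous_of_discreteTopology
  zero_at_infty' := HasCompactSupport.is_zero_at_infty <|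
    .intro F.finite_toSet.isCompact fun _ hx => Set.indicator_of_notMem hx _

theorem finsetIndicator_apply [DiscreteTopology α] (F : Finset α) (x : α) :
    finsetIndicator F x = (F : Set α).indicator 1 x := rfl

theorem norm_finsetIndicator_le [DiscreteTopology α] (F : Finset α) :
    ‖finsetIndicator F‖ ≤ 1 :=
  norm_le_of_forall_norm_apply_le zero_le_one fun x => by
    classical
    rw [finsetIndicator_apply, Set.indicator_apply]
    split_ifs <;> simp

end ZeroAtInftyContinuousMap

def HasKernel (S : C₀(ℕ, ℝ) →L[ℝ] C₀(ℕ, ℝ)) (K : ℕ × ℕ → ℝ) : Prop :=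
  ∀ (x : C₀(ℕ, ℝ)) (v : ℕ), S x v = ∑' u, x u * K (u, v)

/-- Entries of the `n`-th power of the infinite matrix `K`; the products are formed with `∑'`,
so they are meaningful only where the sums converge. -/
noncomputable def kernelPow (K : ℕ × ℕ → ℝ) : ℕ → ℕ × ℕ → ℝ
  | 0, q => if q.1 = q.2 then 1 else 0
  | n + 1, q => ∑' u, kernelPow K n (q.1, u) * K (u, q.2)

theorem kernelPow_nonneg {K : ℕ × ℕ → ℝ} (hK : ∀ q, 0 ≤ K q) (n : ℕ) (q : ℕ × ℕ) :
    0 ≤ kernelPow K n q := by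
  induction n generalizing q with
  | zero => unfold kernelPow; split_ifs <;> norm_num
  | succ n ih => exact tsum_nonneg fun u => mul_nonneg (ih _) (hK _)

namespace HasKernel

variable {S T : C₀(ℕ, ℝ) →L[ℝ] C₀(ℕ, ℝ)} {K L : ℕ × ℕ → ℝ}

theorem sum_le_opNorm (hS : HasKernel S K) (F : Finset ℕ) (v : ℕ) :
    ∑ u ∈ F, K (u, v) ≤ ‖S‖ := by
  have hSF : S (finsetIndicator F) v = ∑ u ∈ F, K (u, v) := by
    rw [hS, tsum_eq_sum (s := F) fun u hu => by simp [finsetIndicator_apply, hu]]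
    exact Finset.sum_congr rfl fun u hu => by simp [finsetIndicator_apply, hu]
  calc ∑ u ∈ F, K (u, v) = S (finsetIndicator F) v := hSF.symm
    _ ≤ ‖S (finsetIndicator F)‖ := Real.le_norm_self _ |>.trans (norm_apply_le_norm _ v)
    _ ≤ ‖S‖ * ‖finsetIndicator F‖ := S.le_opNorm _
    _ ≤ ‖S‖ := mul_le_of_le_one_right (norm_nonneg S) (norm_finsetIndicator_le F)

theorem summable_col (hS : HasKernel S K) (hK : ∀ q, 0 ≤ K q) (v : ℕ) :
    Summable fun u => K (u, v) :=
  summable_of_sum_le (fun _ => hK _) fun F => hS.sum_le_opNorm F v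

theorem tsum_col_le_opNorm (hS : HasKernel S K) (hK : ∀ q, 0 ≤ K q) (v : ℕ) :
    ∑' u, K (u, v) ≤ ‖S‖ :=
  Real.tsum_le_of_sum_le (fun _ => hK _) fun F => hS.sum_le_opNorm F v

theorem opNorm_eq_iSup_tsum_col (hS : HasKernel S K) (hK : ∀ q, 0 ≤ K q) :
    ‖S‖ = ⨆ v, ∑' u, K (u, v) := by
  have hbdd : BddAbove (Set.range fun v => ∑' u, K (u, v)) :=
    ⟨‖S‖, Set.forall_mem_range.2 (hS.tsum_col_le_opNorm hK)⟩
  refine le_antisymm ?_ (ciSup_le (hS.tsum_col_le_opNorm hK))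
  have hM : 0 ≤ ⨆ v, ∑' u, K (u, v) :=
    (tsum_nonneg fun u => hK (u, 0)).trans (le_ciSup hbdd 0)
  refine S.opNorm_le_bound hM fun x => norm_le_of_forall_norm_apply_le (by positivity) fun v => ?_
  calc ‖S x v‖ = ‖∑' u, x u * K (u, v)‖ := by rw [hS]
    _ ≤ ‖x‖ * ∑' u, K (u, v) :=
        tsum_of_norm_bounded ((hS.summable_col hK v).hasSum.mul_left ‖x‖) fun u => by
          rw [norm_mul, Real.norm_of_nonneg (hK _)]
          exact mul_le_mul_of_nonneg_right (norm_apply_le_norm x u) (hK _)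
    _ ≤ (⨆ v, ∑' u, K (u, v)) * ‖x‖ := by
          rw [mul_comm]
          exact mul_le_mul_of_nonneg_right (le_ciSup hbdd v) (norm_nonneg x)

theorem summable_mul (hS : HasKernel S K) (hT : HasKernel T L) (hK : ∀ q, 0 ≤ K q)
    (hL : ∀ q, 0 ≤ L q) (u v : ℕ) : Summable fun u' => K (u, u') * L (u', v) := by
  refine ((hT.summable_col hL v).mul_left ‖S‖).of_nonneg_of_le
    (fun u' => mul_nonneg (hK _) (hL _)) fun u' => ?_
  refine mul_le_mul_of_nonneg_right ?_ (hL _)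
  exact ((hS.summable_col hK u').le_tsum u fun _ _ => hK _).trans (hS.tsum_col_le_opNorm hK u')

theorem comp (hS : HasKernel S K) (hT : HasKernel T L) (hK : ∀ q, 0 ≤ K q) (hL : ∀ q, 0 ≤ L q) :
    HasKernel (T.comp S) fun q => ∑' u', K (q.1, u') * L (u', q.2) := by
  intro x v
  have hprod : Summable fun q : ℕ × ℕ => K (q.2, q.1) * L (q.1, v) := by
    refine (summable_prod_of_nonneg fun q => mul_nonneg (hK _) (hL _)).2
      ⟨fun u' => (hS.summable_col hK u').mul_right (L (u', v)), ?_⟩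
    refine ((hT.summable_col hL v).mul_left ‖S‖).of_nonneg_of_le
      (fun u' => tsum_nonneg fun u => mul_nonneg (hK _) (hL _)) fun u' => ?_
    dsimp only
    rw [tsum_mul_right]
    exact mul_le_mul_of_nonneg_right (hS.tsum_col_le_opNorm hK u') (hL _)
  have hsum : Summable (Function.uncurry fun u' u => x u * K (u, u') * L (u', v)) := by
    refine (hprod.mul_left ‖x‖).of_norm_bounded fun q => ?_
    rw [Function.uncurry_apply_pair, norm_mul, norm_mul, Real.norm_of_nonneg (hK _),
      Real.norm_of_nonneg (hL _), mul_assoc]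
    exact mul_le_mul_of_nonneg_right (norm_apply_le_norm x _) (mul_nonneg (hK _) (hL _))
  calc T (S x) v = ∑' u', (∑' u, x u * K (u, u')) * L (u', v) := by
        simp only [hT _ v, hS x]
    _ = ∑' u', ∑' u, x u * K (u, u') * L (u', v) := by simp only [tsum_mul_right]
    _ = ∑' u, ∑' u', x u * K (u, u') * L (u', v) := hsum.tsum_comm.symm
    _ = ∑' u, x u * ∑' u', K (u, u') * L (u', v) := by simp only [mul_assoc, tsum_mul_left]

theorem one : HasKernel 1 (kernelPow K 0) := fun x v => by
  rw [tsum_eq_single v fun u hu => by simp [kernelPow, hu]]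
  simp [kernelPow]

theorem pow (hS : HasKernel S K) (hK : ∀ q, 0 ≤ K q) (n : ℕ) :
    HasKernel (S ^ n) (kernelPow K n) := by
  induction n with
  | zero => exact one
  | succ n ih => rw [pow_succ']; exact ih.comp hS (kernelPow_nonneg hK n) hK

end HasKernel

/-- The total weight of the paths of length `n` from `u` to `v`, summed in `ℝ≥0∞` so that no
summability side conditions arise. -/
noncomputable def ePathSum (w : ℕ × ℕ → ℝ) (n u v : ℕ) : ℝ≥0∞ :=
  ∑' p : {p : Fin (n + 1) → ℕ // p 0 = u ∧ p (Fin.last n) = v},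
    ∏ k : Fin n, ENNReal.ofReal (w (p.1 k.castSucc, p.1 k.succ))

theorem ePathSum_zero (w : ℕ × ℕ → ℝ) (u v : ℕ) :
    ePathSum w 0 u v = if u = v then 1 else 0 := by
  unfold ePathSum
  split_ifs with h
  · subst h
    have : Unique {p : Fin 1 → ℕ // p 0 = u ∧ p (Fin.last 0) = u} :=
      { default := ⟨fun _ => u, rfl, rfl⟩
        uniq := fun p => Subtype.ext <| funext fun i => by rw [Subsingleton.elim i 0, p.2.1] }
    rw [tsum_eq_single default fun p hp => (hp (Subsingleton.elim _ _)).elim]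
    simp
  · have : IsEmpty {p : Fin 1 → ℕ // p 0 = u ∧ p (Fin.last 0) = v} :=
      ⟨fun p => h (p.2.1.symm.trans p.2.2)⟩
    exact tsum_empty

def pathSnocEquiv (n u v : ℕ) :
    {p : Fin (n + 2) → ℕ // p 0 = u ∧ p (Fin.last (n + 1)) = v} ≃
      Σ u' : ℕ, {q : Fin (n + 1) → ℕ // q 0 = u ∧ q (Fin.last n) = u'} where
  toFun p := ⟨p.1 (Fin.last n).castSucc, Fin.init p.1, p.2.1, rfl⟩
  invFun s := ⟨Fin.snoc s.2.1 v, (Fin.snoc_castSucc (α := fun _ => ℕ) ..).trans s.2.2.1,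
    Fin.snoc_last _ _⟩
  left_inv p := Subtype.ext <| by simp [← p.2.2]
  right_inv := fun ⟨u', q, _, hq⟩ =>
    Sigma.subtype_ext (by simp [← hq]) (Fin.init_snoc (α := fun _ => ℕ) _ _)

theorem ePathSum_succ (w : ℕ × ℕ → ℝ) (n u v : ℕ) :
    ePathSum w (n + 1) u v = ∑' u', ePathSum w n u u' * ENNReal.ofReal (w (u', v)) := by
  rw [ePathSum, ← (pathSnocEquiv n u v).symm.tsum_eq, ENNReal.tsum_sigma']
  refine tsum_congr fun u' => ?_
  rw [ePathSum, ← ENNReal.tsum_mul_right]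
  refine tsum_congr fun q => ?_
  simp only [pathSnocEquiv, Equiv.coe_fn_symm_mk, Fin.prod_univ_castSucc, Fin.succ_castSucc,
    Fin.snoc_castSucc, Fin.succ_last, Fin.snoc_last, q.2.2]

theorem tsum_pathWeight_eq_toReal_ePathSum {w : ℕ × ℕ → ℝ} (hw : ∀ q, 0 ≤ w q) (n u v : ℕ) :
    ∑' p : {p : Fin (n + 1) → ℕ // p 0 = u ∧ p (Fin.last n) = v}, pathWeight w p.1 =
      (ePathSum w n u v).toReal := by
  rw [ePathSum, ENNReal.tsum_toReal_eq fun _ =>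
    ENNReal.prod_ne_top fun _ _ => ENNReal.ofReal_ne_top]
  refine tsum_congr fun p => ?_
  rw [← ENNReal.ofReal_prod_of_nonneg fun _ _ => hw _,
    ENNReal.toReal_ofReal (Finset.prod_nonneg fun _ _ => hw _), pathWeight]

theorem HasKernel.ePathSum_eq_ofReal_kernelPow {T : C₀(ℕ, ℝ) →L[ℝ] C₀(ℕ, ℝ)} {w : ℕ × ℕ → ℝ}
    (hT : HasKernel T w) (hw : ∀ q, 0 ≤ w q) (n u v : ℕ) :
    ePathSum w n u v = ENNReal.ofReal (kernelPow w n (u, v)) := by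
  induction n generalizing v with
  | zero => rw [ePathSum_zero, kernelPow]; split_ifs <;> simp
  | succ n ih =>
    rw [ePathSum_succ, kernelPow, ENNReal.ofReal_tsum_of_nonneg
      (fun u' => mul_nonneg (kernelPow_nonneg hw n _) (hw _))
      ((hT.pow hw n).summable_mul hT (kernelPow_nonneg hw n) hw u v)]
    exact tsum_congr fun u' => by rw [ih, ENNReal.ofReal_mul (kernelPow_nonneg hw n _)]

theorem norm_pow_of_c0_graph_operator_general
    (w : ℕ × ℕ → ℝ) (hw : ∀ q : ℕ × ℕ, 0 ≤ w q)
    (T : C₀(ℕ, ℝ) →L[ℝ] C₀(ℕ, ℝ))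
    (hT : ∀ (x : C₀(ℕ, ℝ)) (u : ℕ), T x u = ∑' n : ℕ, x n * w (n, u)) :
    ∀ n : ℕ, 1 ≤ n →
      ‖T ^ n‖ = ⨆ v : ℕ, ∑' u : ℕ,
        ∑' p : {p : Fin (n + 1) → ℕ // p 0 = u ∧ p (Fin.last n) = v},
          pathWeight w p.1 := by
  intro n _
  have hT : HasKernel T w := hT
  rw [(hT.pow hw n).opNorm_eq_iSup_tsum_col (kernelPow_nonneg hw n)]
  refine iSup_congr fun v => tsum_congr fun u => ?_
  rw [tsum_pathWeight_eq_toReal_ePathSum hw, hT.ePathSum_eq_ofReal_kernelPow hw,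
    ENNReal.toReal_ofReal (kernelPow_nonneg hw n _)]

/-- Let `w : ℕ × ℕ → [0,∞)` be a `c₀`-graph (i.e. (a) `w(u, k) → 0` as
`k → ∞` for each `u` and (b) `sup_u ∑_k w(k, u) < ∞`) and let `T` be its associated
operator on `c₀ = C₀(ℕ, ℝ)`, `(T x)_u = ∑_n x_n · w(n, u)`. Then for every `n ≥ 1`,
`‖T^n‖ = sup_v ∑_u ∑_p w(p)`, the inner sum running over all paths `p` from `u` to `v`
of length `n`. -/
theorem norm_pow_of_c0_graph_operator
    (w : ℕ × ℕ → ℝ) (hw : ∀ q : ℕ × ℕ, 0 ≤ w q)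
    (ha : ∀ u : ℕ, Tendsto (fun k : ℕ => w (u, k)) atTop (nhds 0))
    (hsum : ∀ u : ℕ, Summable fun k : ℕ => w (k, u))
    (hbdd : BddAbove (Set.range fun u : ℕ => ∑' k : ℕ, w (k, u)))
    (T : C₀(ℕ, ℝ) →L[ℝ] C₀(ℕ, ℝ))
    (hT : ∀ (x : C₀(ℕ, ℝ)) (u : ℕ), T x u = ∑' n : ℕ, x n * w (n, u)) :
    ∀ n : ℕ, 1 ≤ n →
      ‖T ^ n‖ = ⨆ v : ℕ, ∑' u : ℕ,
        ∑' p : {p : Fin (n + 1) → ℕ // p 0 = u ∧ p (Fin.last n) = v},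
          pathWeight w p.1 :=
  norm_pow_of_c0_graph_operator_general w hw T hT
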